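/- Let V be a real inner product space, e ∈ V, and s : Fin p → V a family of vectors whose Gram matrix F, defined by F i j = ⟪s i, s j⟫, is invertible. Let g : Fin p → ℝ be defined by g i = ⟪s i, e⟫. Then ⟪e, e⟫ ≥ g ⬝ᵥ (F⁻¹.mulVec g), i.e., ‖e‖² ≥ gᵀ F⁻¹ g. -/
import Mathlib


open Matrix RealInnerProductSpace

/-- Core inequality of the HCRB derivation: if `F` is the (invertible) Gram matrix of the
vectors `s i` and `g i = ⟪s i, e⟫`, then `‖e‖² = ⟪e, e⟫ ≥ gᵀ F⁻¹ g`. -/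
theorem inner_self_ge_gram_quadform {V : Type*} [NormedAddCommGroup V] [InnerProductSpace ℝ V]
    (e : V) {p : ℕ} (s : Fin p → V)
    (F : Matrix (Fin p) (Fin p) ℝ) (hF : ∀ i j, F i j = ⟪s i, s j⟫)
    (hFinv : IsUnit F.det)
    (g : Fin p → ℝ) (hg : ∀ i, g i = ⟪s i, e⟫) :
    ⟪e, e⟫ ≥ g ⬝ᵥ F⁻¹.mulVec g := by
  set c : Fin p → ℝ := F⁻¹.mulVec g with hc
  set v : V := ∑ i, c i • s i with hv
  have hFc : F.mulVec c = g := by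
    rw [hc, Matrix.mulVec_mulVec, Matrix.mul_nonsing_inv _ hFinv, Matrix.one_mulVec]
  have hve : ⟪v, e⟫ = c ⬝ᵥ g := by
    rw [hv, sum_inner]
    simp [dotProduct, inner_smul_left, hg]
  have hvv : ⟪v, v⟫ = c ⬝ᵥ g := by
    rw [hv, sum_inner]
    have : ∀ i, ⟪c i • s i, v⟫ = c i * (F.mulVec c) i := by
      intro i
      rw [inner_smul_left, hv, inner_sum]
      simp [Matrix.mulVec, dotProduct, inner_smul_right, hF, mul_comm]
    rw [Finset.sum_congr rfl (fun i _ => this i)]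
    simp [dotProduct, hFc]
  have h0 : (0:ℝ) ≤ ⟪e - v, e - v⟫ := real_inner_self_nonneg
  have hexp : ⟪e - v, e - v⟫ = ⟪e, e⟫ - c ⬝ᵥ g := by
    rw [real_inner_sub_sub_self, real_inner_comm v e, hve, hvv]
    ring
  have : g ⬝ᵥ c = c ⬝ᵥ g := dotProduct_comm _ _
  rw [← hc] at *
  linarith [h0, hexp.symm ▸ h0]
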